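/- arXiv:1608.01635 — 2 statements merged into one kernel-verified Lean document; each statement's English description precedes it below -/
import Mathlib

section
/- Let δ > 0 and let h₁, h₂ : [0,4π] → ℝ be as in Construction 2.1. Then for every θ ∈ [0,2π], (h₁(θ) − h₁(θ + 2π))² + (h₂(θ) − h₂(θ + 2π))² ≥ δ²/4; equivalently, the infimum over θ ∈ [0,2π] of the Euclidean norm ‖(h₁(θ) − h₁(θ+2π), h₂(θ) − h₂(θ+2π))‖ is at least δ/2. -/
open Set Real

/-- The helper function `h₁` of Construction 2.1: `h₁(θ) = (δ/(2π))·(2π − |θ − 2π|)`. -/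
noncomputable def helperH1 (δ θ : ℝ) : ℝ := (δ / (2 * π)) * (2 * π - |θ - 2 * π|)

/-- The helper function `h₂` of Construction 2.1: `h₂(θ) = −(δ/π)θ` on `[0,π]`,
`h₂(θ) = −δ + (δ/π)(θ−π)` on `[π,3π]`, `h₂(θ) = δ − (δ/π)(θ−3π)` on `[3π,4π]`. -/
noncomputable def helperH2 (δ θ : ℝ) : ℝ :=
  if θ ≤ π then -(δ / π) * θ
  else if θ ≤ 3 * π then -δ + (δ / π) * (θ - π)
  else δ - (δ / π) * (θ - 3 * π)

/-!
In the normalized coordinate `t = (θ - π)/π ∈ [-1, 1]` the separation vector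
`(h₁(θ) - h₁(θ + 2π), h₂(θ) - h₂(θ + 2π))` has first entry `δ t` and second entry of absolute
value `2|δ|(1 - |t|)`. When `|t| ≥ 1/2` the first entry alone has size `≥ |δ|/2`; otherwise the
second one has size `≥ |δ|`.
-/

section SheetSeparation

variable {δ θ : ℝ}

lemma helperH1_sub_helperH1_add_two_pi (h0 : 0 ≤ θ) (h2π : θ ≤ 2 * π) :
    helperH1 δ θ - helperH1 δ (θ + 2 * π) = δ * ((θ - π) / π) := by
  unfold helperH1
  rw [abs_of_nonpos (by linarith), add_sub_cancel_right, abs_of_nonneg h0]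
  field_simp
  ring

lemma helperH2_sub_helperH2_add_two_pi_of_le_pi (h0 : 0 ≤ θ) (hπ : θ ≤ π) :
    helperH2 δ θ - helperH2 δ (θ + 2 * π) = δ * (-2 * θ / π) := by
  have hlow : ¬θ + 2 * π ≤ π := by linarith [pi_pos]
  have hhigh : θ + 2 * π ≤ 3 * π := by linarith
  simp only [helperH2, if_pos hπ, if_neg hlow, if_pos hhigh]
  field_simp
  ring

lemma helperH2_sub_helperH2_add_two_pi_of_pi_lt (hπ : π < θ) (h2π : θ ≤ 2 * π) :
    helperH2 δ θ - helperH2 δ (θ + 2 * π) = δ * (2 * (θ - 2 * π) / π) := by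
  have hlow : ¬θ + 2 * π ≤ π := by linarith
  have hmid : θ ≤ 3 * π := by linarith [pi_pos]
  have hhigh : ¬θ + 2 * π ≤ 3 * π := by linarith
  simp only [helperH2, if_neg hπ.not_ge, if_pos hmid, if_neg hlow, if_neg hhigh]
  field_simp
  ring

lemma abs_helperH2_sub_helperH2_add_two_pi (h0 : 0 ≤ θ) (h2π : θ ≤ 2 * π) :
    |helperH2 δ θ - helperH2 δ (θ + 2 * π)| = |δ| * (2 * (1 - |(θ - π) / π|)) := by
  have hπ := pi_pos
  rcases le_or_gt θ π with hθ | hθ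
  · rw [helperH2_sub_helperH2_add_two_pi_of_le_pi h0 hθ, abs_mul,
      abs_of_nonpos (div_nonpos_of_nonpos_of_nonneg (by linarith) hπ.le),
      abs_of_nonpos (div_nonpos_of_nonpos_of_nonneg (by linarith) hπ.le)]
    field_simp
    ring
  · rw [helperH2_sub_helperH2_add_two_pi_of_pi_lt hθ h2π, abs_mul,
      abs_of_nonpos (div_nonpos_of_nonpos_of_nonneg (by linarith) hπ.le),
      abs_of_nonneg (div_nonneg (by linarith) hπ.le)]
    field_simp
    ring

lemma one_div_four_le_sq_add_sq_two_mul_one_sub_abs (t : ℝ) :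
    1 / 4 ≤ t ^ 2 + (2 * (1 - |t|)) ^ 2 := by
  rcases le_or_gt (1 / 2) |t| with ht | ht
  · nlinarith [sq_abs t, sq_nonneg (2 * (1 - |t|))]
  · nlinarith [sq_nonneg t]

end SheetSeparation

theorem helper_functions_sheet_separation_general (δ : ℝ) :
    ∀ θ ∈ Icc (0:ℝ) (2 * π),
      δ ^ 2 / 4 ≤ (helperH1 δ θ - helperH1 δ (θ + 2 * π)) ^ 2
        + (helperH2 δ θ - helperH2 δ (θ + 2 * π)) ^ 2 := by
  rintro θ ⟨h0, h2π⟩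
  set t := (θ - π) / π
  rw [← sq_abs (helperH2 δ θ - _), abs_helperH2_sub_helperH2_add_two_pi h0 h2π,
    helperH1_sub_helperH1_add_two_pi h0 h2π, mul_pow, mul_pow, sq_abs, ← mul_add]
  calc δ ^ 2 / 4 = δ ^ 2 * (1 / 4) := by ring
    _ ≤ δ ^ 2 * (t ^ 2 + (2 * (1 - |t|)) ^ 2) :=
      mul_le_mul_of_nonneg_left (one_div_four_le_sq_add_sq_two_mul_one_sub_abs t) (sq_nonneg δ)

/-- The key lower bound (equation (3)) of Construction 2.1: for every `θ ∈ [0,2π]`,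
`(h₁(θ) − h₁(θ+2π))² + (h₂(θ) − h₂(θ+2π))² ≥ δ²/4`; equivalently the Euclidean norm of
`(h₁(θ) − h₁(θ+2π), h₂(θ) − h₂(θ+2π))` is at least `δ/2`. -/
theorem helper_functions_sheet_separation (δ : ℝ) (hδ : 0 < δ) :
    ∀ θ ∈ Icc (0:ℝ) (2 * π),
      δ ^ 2 / 4 ≤ (helperH1 δ θ - helperH1 δ (θ + 2 * π)) ^ 2
        + (helperH2 δ θ - helperH2 δ (θ + 2 * π)) ^ 2 :=
  helper_functions_sheet_separation_general δ
end

section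
/- Let δ > 0, l > 0 and let Ψ : [0,l] × [0,4π] → ℝ² be the map Ψ(r,θ) = (φ(r)h₁(θ), φ(r)h₂(θ)) of Construction 2.1. Then for all (r,θ), (r',θ') ∈ [0,l] × [0,4π] one has ‖Ψ(r,θ) − Ψ(r',θ')‖ ≤ 8δ·( |r − r'| + max(r,r')·|θ − θ'| ). -/
open Set Real

/-- The cut-off function `φ` of Construction 2.1 (equation (4)), with width parameter `l`. -/
noncomputable def cutOff (l r : ℝ) : ℝ :=
  if r ≤ l / 5 then 5 * r
  else if r ≤ 4 * l / 5 then l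
  else 5 * (l - r)

/-- The map `Ψ(r,θ) = (φ(r)h₁(θ), φ(r)h₂(θ))` of Construction 2.1, as a map into `ℝ²`
(given by its two components). -/
noncomputable def PsiMap (δ l r θ : ℝ) : ℝ × ℝ :=
  (cutOff l r * helperH1 δ θ, cutOff l r * helperH2 δ θ)

/-!
Ψ is a product of the cut-off `φ`, which is 5-Lipschitz with `0 ≤ φ(r) ≤ 5r`, and the profiles
`h₁`, `h₂`, which are bounded by `δ` and `δ`-Lipschitz in `θ`. Splitting
`φ(r)h(θ) − φ(r')h(θ') = (φ(r) − φ(r'))h(θ) + φ(r')(h(θ) − h(θ'))` bounds each component of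
`Ψ(r,θ) − Ψ(r',θ')` by `5δ(|r − r'| + max(r,r')|θ − θ'|)`, and `5√2 ≤ 8`.
-/

lemma cutOff_eq_min {l : ℝ} (hl : 0 < l) (r : ℝ) :
    cutOff l r = min (min (5 * r) l) (5 * (l - r)) := by
  unfold cutOff
  split_ifs <;> simp only [min_def] <;> split_ifs <;> linarith

lemma lipschitzWith_cutOff {l : ℝ} (hl : 0 < l) : LipschitzWith 5 (cutOff l) := by
  have hlin : LipschitzWith 5 fun r : ℝ => 5 * r :=
    LipschitzWith.of_dist_le_mul fun r r' => by
      simp [Real.dist_eq, ← mul_sub, abs_mul]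
  have hrefl : LipschitzWith 5 fun r : ℝ => 5 * (l - r) :=
    LipschitzWith.of_dist_le_mul fun r r' => by
      rw [Real.dist_eq, Real.dist_eq, ← mul_sub, abs_mul, sub_sub_sub_cancel_left, abs_sub_comm]
      norm_num
  simpa [funext (cutOff_eq_min hl)] using (hlin.min_const l).min hrefl

lemma cutOff_nonneg {l r : ℝ} (hr : r ∈ Icc 0 l) : 0 ≤ cutOff l r := by
  unfold cutOff
  split_ifs <;> linarith [hr.1, hr.2]

lemma cutOff_le_five_mul (l r : ℝ) : cutOff l r ≤ 5 * r := by
  unfold cutOff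
  split_ifs <;> linarith

lemma abs_helperH1_le {δ θ : ℝ} (hδ : 0 ≤ δ) (hθ : θ ∈ Icc 0 (4 * π)) :
    |helperH1 δ θ| ≤ δ := by
  have hdist : |θ - 2 * π| ≤ 2 * π := abs_le.2 ⟨by linarith [hθ.1], by linarith [hθ.2]⟩
  unfold helperH1
  rw [abs_mul, abs_of_nonneg (by positivity : 0 ≤ δ / (2 * π)),
    abs_of_nonneg (by linarith : 0 ≤ 2 * π - |θ - 2 * π|)]
  calc δ / (2 * π) * (2 * π - |θ - 2 * π|) ≤ δ / (2 * π) * (2 * π) := by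
        gcongr; linarith [abs_nonneg (θ - 2 * π)]
    _ = δ := div_mul_cancel₀ δ (by positivity)

lemma abs_helperH1_sub_le {δ : ℝ} (hδ : 0 ≤ δ) (θ θ' : ℝ) :
    |helperH1 δ θ - helperH1 δ θ'| ≤ δ * |θ - θ'| := by
  have hdist : |(|θ' - 2 * π| - |θ - 2 * π|)| ≤ |θ - θ'| := by
    simpa [abs_sub_comm θ'] using abs_abs_sub_abs_le_abs_sub (θ' - 2 * π) (θ - 2 * π)
  calc |helperH1 δ θ - helperH1 δ θ'|
        = δ / (2 * π) * |(|θ' - 2 * π| - |θ - 2 * π|)| := by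
          rw [helperH1, helperH1, ← mul_sub, abs_mul, abs_of_nonneg (by positivity)]
          ring_nf
    _ ≤ δ / (2 * π) * |θ - θ'| := by gcongr
    _ ≤ δ * |θ - θ'| := by
          gcongr
          exact div_le_self hδ (by linarith [pi_gt_three])

lemma helperH2_eq_abs (δ θ : ℝ) :
    helperH2 δ θ = δ / π * (|θ - π| - |θ - 3 * π| - (θ - 2 * π)) := by
  have hπ := pi_pos
  unfold helperH2
  split_ifs
  · rw [abs_of_nonpos (by linarith), abs_of_nonpos (by linarith)]; ring
  · rw [abs_of_nonneg (by linarith), abs_of_nonpos (by linarith)]; field_simp; ring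
  · rw [abs_of_nonneg (by linarith), abs_of_nonneg (by linarith)]; field_simp; ring

lemma abs_helperH2_le {δ θ : ℝ} (hδ : 0 ≤ δ) (hθ : θ ∈ Icc 0 (4 * π)) :
    |helperH2 δ θ| ≤ δ := by
  have hπ := pi_pos
  have hslope : δ / π * π = δ := div_mul_cancel₀ δ hπ.ne'
  have : 0 ≤ δ / π := by positivity
  obtain ⟨hθ0, hθ4⟩ := hθ
  unfold helperH2
  split_ifs <;> rw [abs_le] <;> constructor <;> nlinarith

lemma abs_helperH2_sub_le {δ : ℝ} (hδ : 0 ≤ δ) (θ θ' : ℝ) :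
    |helperH2 δ θ - helperH2 δ θ'| ≤ δ * |θ - θ'| := by
  have h₁ := abs_abs_sub_abs_le_abs_sub (θ - π) (θ' - π)
  have h₃ := abs_abs_sub_abs_le_abs_sub (θ - 3 * π) (θ' - 3 * π)
  simp only [sub_sub_sub_cancel_right] at h₁ h₃
  have hsum : |(|θ - π| - |θ - 3 * π| - (θ - 2 * π)) - (|θ' - π| - |θ' - 3 * π| - (θ' - 2 * π))|
      ≤ 3 * |θ - θ'| := by
    rw [abs_le] at h₁ h₃ ⊢
    constructor <;> cases abs_cases (θ - θ') <;> linarith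
  calc |helperH2 δ θ - helperH2 δ θ'|
        = δ / π * |(|θ - π| - |θ - 3 * π| - (θ - 2 * π))
            - (|θ' - π| - |θ' - 3 * π| - (θ' - 2 * π))| := by
          rw [helperH2_eq_abs, helperH2_eq_abs, ← mul_sub, abs_mul, abs_of_nonneg (by positivity)]
    _ ≤ δ / π * (3 * |θ - θ'|) := by gcongr
    _ ≤ δ * |θ - θ'| := by
          rw [← mul_assoc]
          gcongr
          rw [div_mul_eq_mul_div, div_le_iff₀ pi_pos]
          nlinarith [pi_gt_three]

lemma abs_cutOff_mul_sub_le {l δ r r' θ θ' : ℝ} {h : ℝ → ℝ} (hl : 0 < l) (hr' : r' ∈ Icc 0 l)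
    (hbound : |h θ| ≤ δ) (hlip : |h θ - h θ'| ≤ δ * |θ - θ'|) :
    |cutOff l r * h θ - cutOff l r' * h θ'| ≤ 5 * δ * (|r - r'| + max r r' * |θ - θ'|) := by
  have hcut : |cutOff l r - cutOff l r'| ≤ 5 * |r - r'| := by
    simpa [Real.dist_eq] using (lipschitzWith_cutOff hl).dist_le_mul r r'
  have hcut' : |cutOff l r'| ≤ 5 * max r r' := by
    rw [abs_of_nonneg (cutOff_nonneg hr')]
    linarith [cutOff_le_five_mul l r', le_max_right r r']
  calc |cutOff l r * h θ - cutOff l r' * h θ'|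
        = |(cutOff l r - cutOff l r') * h θ + cutOff l r' * (h θ - h θ')| := by ring_nf
    _ ≤ |cutOff l r - cutOff l r'| * |h θ| + |cutOff l r'| * |h θ - h θ'| := by
          rw [← abs_mul, ← abs_mul]; exact abs_add_le _ _
    _ ≤ 5 * |r - r'| * δ + 5 * max r r' * (δ * |θ - θ'|) := by
          gcongr; exact (abs_nonneg _).trans hcut'
    _ = 5 * δ * (|r - r'| + max r r' * |θ - θ'|) := by ring

lemma sqrt_sq_add_sq_le_sqrt_two_mul {x y c : ℝ} (hx : |x| ≤ c) (hy : |y| ≤ c) :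
    √(x ^ 2 + y ^ 2) ≤ √2 * c := by
  have hc : 0 ≤ c := (abs_nonneg x).trans hx
  have hx2 : x ^ 2 ≤ c ^ 2 := sq_le_sq' (abs_le.1 hx).1 (abs_le.1 hx).2
  have hy2 : y ^ 2 ≤ c ^ 2 := sq_le_sq' (abs_le.1 hy).1 (abs_le.1 hy).2
  calc √(x ^ 2 + y ^ 2) ≤ √(2 * c ^ 2) := Real.sqrt_le_sqrt (by linarith)
    _ = √2 * c := by rw [Real.sqrt_mul zero_le_two, Real.sqrt_sq hc]

/-- The quantitative Lipschitz bound (upper bound in equation (7)) of Construction 2.1 with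
respect to the polar metric: for all `(r,θ), (r',θ') ∈ [0,l] × [0,4π]`,
`‖Ψ(r,θ) − Ψ(r',θ')‖ ≤ 8δ·(|r − r'| + max(r,r')·|θ − θ'|)`. -/
theorem Psi_lipschitz_bound (δ l : ℝ) (hδ : 0 < δ) (hl : 0 < l) :
    ∀ r ∈ Icc (0:ℝ) l, ∀ θ ∈ Icc (0:ℝ) (4 * π),
      ∀ r' ∈ Icc (0:ℝ) l, ∀ θ' ∈ Icc (0:ℝ) (4 * π),
        Real.sqrt (((PsiMap δ l r θ).1 - (PsiMap δ l r' θ').1) ^ 2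
            + ((PsiMap δ l r θ).2 - (PsiMap δ l r' θ').2) ^ 2)
          ≤ 8 * δ * (|r - r'| + max r r' * |θ - θ'|) := by
  intro r _ θ hθ r' hr' θ' _
  set M := |r - r'| + max r r' * |θ - θ'|
  have h₁ : |(PsiMap δ l r θ).1 - (PsiMap δ l r' θ').1| ≤ 5 * δ * M :=
    abs_cutOff_mul_sub_le hl hr' (abs_helperH1_le hδ.le hθ) (abs_helperH1_sub_le hδ.le θ θ')
  have h₂ : |(PsiMap δ l r θ).2 - (PsiMap δ l r' θ').2| ≤ 5 * δ * M :=
    abs_cutOff_mul_sub_le hl hr' (abs_helperH2_le hδ.le hθ) (abs_helperH2_sub_le hδ.le θ θ')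
  have hM : 0 ≤ 5 * δ * M := (abs_nonneg _).trans h₁
  calc _ ≤ √2 * (5 * δ * M) := sqrt_sq_add_sq_le_sqrt_two_mul h₁ h₂
    _ ≤ 8 * δ * M := by nlinarith [sqrt_two_lt_three_halves]
end
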